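/- Let Ω ⊆ ℝⁿ be open, H ∈ ℝ, and let u₁, u₂ be C¹ functions on Ω satisfying weakly ∫_Ω F(Du₁)·Dζ dx = H ∫_Ω ζ dx and ∫_Ω F(Du₂)·Dζ dx = −H ∫_Ω ζ dx for every C¹ function ζ with compact support in Ω, where F(p) = p/√(1+|p|²). Define u_a := (u₁+u₂)/2, v := (u₂−u₁)/2, and for p, q ∈ ℝⁿ set a_{ij}(p,q) := ∫₀¹ (∂F_i/∂p_j)(p + (2t−1)q) dt and b_{ij}(p,q) := a_{ij}(p,q) − δ_{ij}. Then: (i) for every C¹ function ζ with compact support in Ω, ∫_Ω Σ_{i,j} (δ_{ij} + b_{ij}(Du_a(x), Dv(x))) ∂_j v ∂_i ζ dx = −H ∫_Ω ζ dx; and (ii) there is a constant C = C(n) such that |b_{ij}(p,q)| ≤ C (|p|² + |q|²) for all p, q ∈ ℝⁿ and all i, j. -/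

import Mathlib

open MeasureTheory Metric Set

noncomputable section

abbrev En (n : ℕ) := EuclideanSpace ℝ (Fin n)

/-- The `i`-th partial derivative of `f`. -/
def pd {n : ℕ} (f : En n → ℝ) (i : Fin n) (x : En n) : ℝ :=
  fderiv ℝ f x (EuclideanSpace.single i 1)

/-- `|Du|²`, the squared length of the gradient of `u`. -/
def gradSq {n : ℕ} (u : En n → ℝ) (x : En n) : ℝ := ∑ i, pd u i x ^ 2

/-- The `i`-th component of `F(Du)` where `F(p) = p/√(1+|p|²)`. -/
def Fcomp {n : ℕ} (u : En n → ℝ) (i : Fin n) (x : En n) : ℝ :=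
  pd u i x / Real.sqrt (1 + gradSq u x)

/-- `|p|²` for `p ∈ ℝⁿ`. -/
def normSq {n : ℕ} (p : Fin n → ℝ) : ℝ := ∑ i, p i ^ 2

/-- The Jacobian `∂F_i/∂p_j` of `F(p) = p/√(1+|p|²)`. -/
def DF {n : ℕ} (i j : Fin n) (p : Fin n → ℝ) : ℝ :=
  (if i = j then (1:ℝ) else 0) / Real.sqrt (1 + normSq p)
    - p i * p j / (1 + normSq p) ^ (3/2 : ℝ)

/-- `a_{ij}(p,q) = ∫₀¹ (∂F_i/∂p_j)(p + (2t−1)q) dt`. -/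
def aCoef {n : ℕ} (i j : Fin n) (p q : Fin n → ℝ) : ℝ :=
  ∫ t in (0:ℝ)..1, DF i j fun k => p k + (2 * t - 1) * q k

/-- `b_{ij}(p,q) = a_{ij}(p,q) − δ_{ij}`. -/
def bCoef {n : ℕ} (i j : Fin n) (p q : Fin n → ℝ) : ℝ :=
  aCoef i j p q - if i = j then 1 else 0

/-- The average of the two sheets. -/
def uavg {n : ℕ} (u₁ u₂ : En n → ℝ) : En n → ℝ := fun x => (u₁ x + u₂ x) / 2

/-- The semi-difference of the two sheets. -/
def usd {n : ℕ} (u₁ u₂ : En n → ℝ) : En n → ℝ := fun x => (u₂ x - u₁ x) / 2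

/-! With `p = Du_a` and `q = Dv` one has `Du₂ = p + q` and `Du₁ = p - q`, and by the fundamental
theorem of calculus along the segment `t ↦ p + (2t - 1) q`,
`F(p + q) - F(p - q) = 2 a(p, q) q`. Since `δ + b = a`, half the difference of the two weak
equations is therefore the equation for `v`. For the bound on `b`, the Jacobian satisfies
`|DF(r) - I| ≤ 2|r|²` entrywise (from `1 - s ≤ 1/√(1+s) ≤ 1` and `|r_i r_j| ≤ |r|²`), and
`|p + (2t - 1) q|² ≤ 2(|p|² + |q|²)` on the segment. -/

section Coefficients

variable {n : ℕ}

theorem normSq_nonneg (p : Fin n → ℝ) : 0 ≤ normSq p :=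
  Finset.sum_nonneg fun _ _ => sq_nonneg _

theorem sq_le_normSq (p : Fin n → ℝ) (i : Fin n) : p i ^ 2 ≤ normSq p :=
  Finset.single_le_sum (fun k _ => sq_nonneg (p k)) (Finset.mem_univ i)

theorem abs_mul_le_normSq (p : Fin n → ℝ) (i j : Fin n) : |p i * p j| ≤ normSq p := by
  nlinarith [sq_le_normSq p i, sq_le_normSq p j, abs_mul (p i) (p j),
    sq_nonneg (|p i| - |p j|), sq_abs (p i), sq_abs (p j)]

theorem normSq_add_mul_le (p q : Fin n → ℝ) {c : ℝ} (hc : c ^ 2 ≤ 1) :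
    normSq (fun k => p k + c * q k) ≤ 2 * (normSq p + normSq q) := by
  rw [normSq, normSq, normSq, ← Finset.sum_add_distrib, Finset.mul_sum]
  refine Finset.sum_le_sum fun k _ => ?_
  nlinarith [sq_nonneg (p k - c * q k), mul_le_mul_of_nonneg_right hc (sq_nonneg (q k))]

theorem rpow_three_halves {x : ℝ} (hx : 0 ≤ x) : x ^ (3 / 2 : ℝ) = Real.sqrt x ^ 3 := by
  rw [Real.sqrt_eq_rpow, ← Real.rpow_natCast, ← Real.rpow_mul hx]
  norm_num

theorem DF_eq (i j : Fin n) (p : Fin n → ℝ) :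
    DF i j p = (if i = j then 1 else 0) / Real.sqrt (1 + normSq p)
      - p i * p j / Real.sqrt (1 + normSq p) ^ 3 := by
  rw [DF, rpow_three_halves (by linarith [normSq_nonneg p])]

theorem abs_one_div_sqrt_one_add_sub_one_le {s : ℝ} (hs : 0 ≤ s) :
    |1 / Real.sqrt (1 + s) - 1| ≤ s := by
  have hT1 : 1 ≤ Real.sqrt (1 + s) := Real.one_le_sqrt.mpr (by linarith)
  have hTs : Real.sqrt (1 + s) ≤ 1 + s := by
    rw [Real.sqrt_le_left (by linarith)]
    nlinarith
  have hT0 : 0 < Real.sqrt (1 + s) := by linarith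
  rw [abs_le]
  constructor
  · have : 1 - s ≤ 1 / Real.sqrt (1 + s) := by
      rw [le_div_iff₀ hT0]
      nlinarith
    linarith
  · have : 1 / Real.sqrt (1 + s) ≤ 1 := by rwa [div_le_one hT0]
    linarith

theorem abs_DF_sub_delta_le (i j : Fin n) (p : Fin n → ℝ) :
    |DF i j p - (if i = j then 1 else 0)| ≤ 2 * normSq p := by
  have hs := normSq_nonneg p
  have hpow : 1 ≤ (1 + normSq p) ^ (3 / 2 : ℝ) := Real.one_le_rpow (by linarith) (by norm_num)
  have hoff : |p i * p j / (1 + normSq p) ^ (3 / 2 : ℝ)| ≤ normSq p := by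
    rw [abs_div, abs_of_pos (by positivity : (0 : ℝ) < (1 + normSq p) ^ (3 / 2 : ℝ))]
    exact (div_le_self (abs_nonneg _) hpow).trans (abs_mul_le_normSq p i j)
  have hdiag := abs_one_div_sqrt_one_add_sub_one_le hs
  rw [DF]
  split_ifs with hij
  · calc |1 / Real.sqrt (1 + normSq p) - p i * p j / (1 + normSq p) ^ (3 / 2 : ℝ) - 1|
        ≤ |1 / Real.sqrt (1 + normSq p) - 1| + |p i * p j / (1 + normSq p) ^ (3 / 2 : ℝ)| := by
          rw [sub_right_comm]
          exact abs_sub _ _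
      _ ≤ 2 * normSq p := by linarith
  · rw [zero_div, zero_sub, sub_zero, abs_neg]
    linarith

theorem continuous_DF (i j : Fin n) : Continuous (DF i j) := by
  have hpos : ∀ p : Fin n → ℝ, 0 < 1 + normSq p := fun p => by linarith [normSq_nonneg p]
  have hnormSq : Continuous (normSq (n := n)) :=
    continuous_finsetSum _ fun k _ => (continuous_apply k).pow 2
  refine Continuous.sub ?_ ?_
  · exact continuous_const.div (continuous_const.add hnormSq).sqrt
      fun p => (Real.sqrt_pos.mpr (hpos p)).ne'
  · exact ((continuous_apply i).mul (continuous_apply j)).div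
      ((continuous_const.add hnormSq).rpow_const fun _ => Or.inr (by norm_num))
      fun p => (Real.rpow_pos_of_pos (hpos p) _).ne'

theorem continuous_DF_segment (i j : Fin n) (p q : Fin n → ℝ) :
    Continuous fun t : ℝ => DF i j fun k => p k + (2 * t - 1) * q k :=
  (continuous_DF i j).comp <| continuous_pi fun k => by fun_prop

theorem bCoef_eq_integral (i j : Fin n) (p q : Fin n → ℝ) :
    bCoef i j p q = ∫ t in (0 : ℝ)..1,
      (DF i j fun k => p k + (2 * t - 1) * q k) - (if i = j then 1 else 0) := by
  rw [intervalIntegral.integral_sub ((continuous_DF_segment i j p q).intervalIntegrable 0 1)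
    intervalIntegrable_const, intervalIntegral.integral_const]
  simp [bCoef, aCoef]

theorem abs_bCoef_le (i j : Fin n) (p q : Fin n → ℝ) :
    |bCoef i j p q| ≤ 4 * (normSq p + normSq q) := by
  rw [bCoef_eq_integral]
  have hbound : ∀ t ∈ Set.uIoc (0 : ℝ) 1,
      ‖(DF i j fun k => p k + (2 * t - 1) * q k) - (if i = j then 1 else 0)‖
        ≤ 4 * (normSq p + normSq q) := by
    intro t ht
    rw [Set.uIoc_of_le zero_le_one] at ht
    have hc : (2 * t - 1) ^ 2 ≤ 1 := by nlinarith [ht.1, ht.2]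
    rw [Real.norm_eq_abs]
    linarith [abs_DF_sub_delta_le i j fun k => p k + (2 * t - 1) * q k,
      normSq_add_mul_le p q hc]
  simpa using intervalIntegral.norm_integral_le_of_norm_le_const hbound

end Coefficients

section MeanCurvatureOperator

variable {n : ℕ}

def Fvec (p : Fin n → ℝ) (i : Fin n) : ℝ := p i / Real.sqrt (1 + normSq p)

theorem sum_DF_mul (i : Fin n) (p v : Fin n → ℝ) :
    ∑ j, DF i j p * v j = v i / Real.sqrt (1 + normSq p)
      - p i * (∑ j, p j * v j) / Real.sqrt (1 + normSq p) ^ 3 := by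
  simp only [DF_eq, sub_mul, Finset.sum_sub_distrib, div_mul_eq_mul_div, ite_mul, one_mul,
    zero_mul, Finset.sum_ite_eq, Finset.mem_univ, if_true, ← Finset.sum_div, Finset.mul_sum,
    mul_assoc]

theorem hasDerivAt_Fvec_comp {r : ℝ → Fin n → ℝ} {r' : Fin n → ℝ} {t : ℝ}
    (hr : ∀ k, HasDerivAt (fun s => r s k) (r' k) t) (i : Fin n) :
    HasDerivAt (fun s => Fvec (r s) i) (∑ j, DF i j (r t) * r' j) t := by
  have hpos : 0 < 1 + normSq (r t) := by linarith [normSq_nonneg (r t)]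
  have hT : 0 < Real.sqrt (1 + normSq (r t)) := Real.sqrt_pos.mpr hpos
  have hnormSq : HasDerivAt (fun s => 1 + normSq (r s)) (∑ k, 2 * r t k * r' k) t := by
    simp only [normSq]
    exact (HasDerivAt.fun_sum fun k _ => by simpa using (hr k).fun_pow 2).const_add 1
  refine ((hr i).fun_div (hnormSq.sqrt hpos.ne') hT.ne').congr_deriv ?_
  have hsum : ∑ k, 2 * r t k * r' k = 2 * ∑ k, r t k * r' k := by
    rw [Finset.mul_sum]
    exact Finset.sum_congr rfl fun k _ => by ring
  rw [sum_DF_mul, hsum]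
  field_simp

theorem two_mul_sum_aCoef_mul (i : Fin n) (p q : Fin n → ℝ) :
    2 * ∑ j, aCoef i j p q * q j
      = Fvec (fun k => p k + q k) i - Fvec (fun k => p k - q k) i := by
  have hsegment : ∀ t k, HasDerivAt (fun s : ℝ => p k + (2 * s - 1) * q k) (2 * q k) t :=
    fun t k => by
      simpa using ((((hasDerivAt_id t).const_mul 2).sub_const 1).mul_const (q k)).const_add (p k)
  have hcont : ∀ j, Continuous
      fun t : ℝ => (DF i j fun k => p k + (2 * t - 1) * q k) * (2 * q j) :=
    fun j => (continuous_DF_segment i j p q).mul continuous_const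
  have hFTC := intervalIntegral.integral_eq_sub_of_hasDerivAt
    (fun t _ => hasDerivAt_Fvec_comp (hsegment t) i)
    ((continuous_finsetSum _ fun j _ => hcont j).intervalIntegrable 0 1)
  rw [intervalIntegral.integral_finsetSum fun j _ => (hcont j).intervalIntegrable 0 1] at hFTC
  simp only [intervalIntegral.integral_mul_const] at hFTC
  norm_num [← sub_eq_add_neg] at hFTC
  rw [← hFTC, Finset.mul_sum]
  exact Finset.sum_congr rfl fun j _ => by rw [aCoef]; ring

theorem abs_Fvec_le_one (p : Fin n → ℝ) (i : Fin n) : |Fvec p i| ≤ 1 := by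
  have hT : 0 < Real.sqrt (1 + normSq p) := Real.sqrt_pos.mpr (by linarith [normSq_nonneg p])
  rw [Fvec, abs_div, abs_of_pos hT, div_le_one hT]
  exact Real.abs_le_sqrt (by linarith [sq_le_normSq p i])

end MeanCurvatureOperator

section WeakEquation

variable {n : ℕ}

theorem Fcomp_eq_Fvec (u : En n → ℝ) (i : Fin n) (x : En n) :
    Fcomp u i x = Fvec (fun k => pd u k x) i := rfl

theorem pd_uavg {u₁ u₂ : En n → ℝ} {x : En n} (hd₁ : DifferentiableAt ℝ u₁ x)
    (hd₂ : DifferentiableAt ℝ u₂ x) (k : Fin n) :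
    pd (uavg u₁ u₂) k x = (pd u₁ k x + pd u₂ k x) / 2 := by
  unfold pd uavg
  simp only [div_eq_mul_inv]
  rw [fderiv_mul_const (c := fun y => u₁ y + u₂ y) (hd₁.add hd₂), fderiv_fun_add hd₁ hd₂]
  simp only [smul_apply, add_apply, smul_eq_mul]
  ring

theorem pd_usd {u₁ u₂ : En n → ℝ} {x : En n} (hd₁ : DifferentiableAt ℝ u₁ x)
    (hd₂ : DifferentiableAt ℝ u₂ x) (k : Fin n) :
    pd (usd u₁ u₂) k x = (pd u₂ k x - pd u₁ k x) / 2 := by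
  unfold pd usd
  simp only [div_eq_mul_inv]
  rw [fderiv_mul_const (c := fun y => u₂ y - u₁ y) (hd₂.sub hd₁), fderiv_fun_sub hd₂ hd₁]
  simp only [smul_apply, sub_apply, smul_eq_mul]
  ring

theorem sum_aCoef_mul_pd_usd {u₁ u₂ : En n → ℝ} {x : En n} (hd₁ : DifferentiableAt ℝ u₁ x)
    (hd₂ : DifferentiableAt ℝ u₂ x) (i : Fin n) :
    ∑ j, aCoef i j (fun k => pd (uavg u₁ u₂) k x) (fun k => pd (usd u₁ u₂) k x)
        * pd (usd u₁ u₂) j x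
      = (Fcomp u₂ i x - Fcomp u₁ i x) / 2 := by
  have hadd : (fun k => pd (uavg u₁ u₂) k x + pd (usd u₁ u₂) k x) = fun k => pd u₂ k x := by
    funext k
    rw [pd_uavg hd₁ hd₂, pd_usd hd₁ hd₂]
    ring
  have hsub : (fun k => pd (uavg u₁ u₂) k x - pd (usd u₁ u₂) k x) = fun k => pd u₁ k x := by
    funext k
    rw [pd_uavg hd₁ hd₂, pd_usd hd₁ hd₂]
    ring
  have h := two_mul_sum_aCoef_mul i (fun k => pd (uavg u₁ u₂) k x) (fun k => pd (usd u₁ u₂) k x)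
  rw [hadd, hsub, ← Fcomp_eq_Fvec, ← Fcomp_eq_Fvec] at h
  linarith

theorem sum_coef_mul_pd_usd_mul_pd {u₁ u₂ : En n → ℝ} {x : En n} (hd₁ : DifferentiableAt ℝ u₁ x)
    (hd₂ : DifferentiableAt ℝ u₂ x) (ζ : En n → ℝ) :
    ∑ i, ∑ j, ((if i = j then (1 : ℝ) else 0)
          + bCoef i j (fun k => pd (uavg u₁ u₂) k x) (fun k => pd (usd u₁ u₂) k x))
        * pd (usd u₁ u₂) j x * pd ζ i x
      = (∑ i, Fcomp u₂ i x * pd ζ i x) / 2 - (∑ i, Fcomp u₁ i x * pd ζ i x) / 2 := by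
  simp only [bCoef, add_sub_cancel, ← Finset.sum_mul, sum_aCoef_mul_pd_usd hd₁ hd₂,
    Finset.sum_div, ← Finset.sum_sub_distrib]
  exact Finset.sum_congr rfl fun i _ => by ring

theorem integrable_sum_Fcomp_mul_pd (u : En n → ℝ) {ζ : En n → ℝ} (hζ : ContDiff ℝ 1 ζ)
    (hcs : HasCompactSupport ζ) : Integrable fun x => ∑ i, Fcomp u i x * pd ζ i x := by
  refine integrable_finsetSum _ fun i _ => ?_
  have hpd : Continuous (pd ζ i) := (hζ.continuous_fderiv one_ne_zero).clm_apply continuous_const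
  have hmeas : Measurable (Fcomp u i) :=
    (measurable_fderiv_apply_const ℝ u _).div <| (measurable_const.add <|
      Finset.measurable_sum _ fun j _ => (measurable_fderiv_apply_const ℝ u _).pow_const 2).sqrt
  exact (hpd.integrable_of_hasCompactSupport (hcs.fderiv_apply (𝕜 := ℝ) _)).bdd_mul
    hmeas.aestronglyMeasurable (ae_of_all _ fun x =>
      (Real.norm_eq_abs _).trans_le (abs_Fvec_le_one (fun k => pd u k x) i))

end WeakEquation

/-- **Derivation of the uniformly elliptic divergence-form PDE for the semi-difference**
of two CMC graphs with opposite mean-curvature signs (equation (7.2) of the paper):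
`v = (u₂−u₁)/2` satisfies `∫ Σ (δ_{ij} + b_{ij}(Du_a,Dv)) ∂_j v ∂_i ζ = −H ∫ ζ`, and the
coefficients `b_{ij}` satisfy `|b_{ij}(p,q)| ≤ C (|p|² + |q|²)`. -/
theorem semidifference_pde_derivation
    {n : ℕ} (Ω : Set (En n)) (hΩ : IsOpen Ω) (H : ℝ)
    (u₁ u₂ : En n → ℝ)
    (h1 : ContDiffOn ℝ 1 u₁ Ω) (h2 : ContDiffOn ℝ 1 u₂ Ω)
    (hw1 : ∀ ζ : En n → ℝ, ContDiff ℝ 1 ζ → HasCompactSupport ζ → tsupport ζ ⊆ Ω →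
      (∫ x in Ω, ∑ i, Fcomp u₁ i x * pd ζ i x) = H * ∫ x in Ω, ζ x)
    (hw2 : ∀ ζ : En n → ℝ, ContDiff ℝ 1 ζ → HasCompactSupport ζ → tsupport ζ ⊆ Ω →
      (∫ x in Ω, ∑ i, Fcomp u₂ i x * pd ζ i x) = -(H * ∫ x in Ω, ζ x)) :
    (∀ ζ : En n → ℝ, ContDiff ℝ 1 ζ → HasCompactSupport ζ → tsupport ζ ⊆ Ω →
      (∫ x in Ω, ∑ i, ∑ j,
          ((if i = j then (1:ℝ) else 0)
              + bCoef i j (fun k => pd (uavg u₁ u₂) k x) (fun k => pd (usd u₁ u₂) k x))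
            * pd (usd u₁ u₂) j x * pd ζ i x)
        = -(H * ∫ x in Ω, ζ x)) ∧
    (∃ C : ℝ, 0 < C ∧ ∀ (p q : Fin n → ℝ) (i j : Fin n),
      |bCoef i j p q| ≤ C * (normSq p + normSq q)) := by
  refine ⟨fun ζ hζ hcs hsupp => ?_, 4, by norm_num, fun p q i j => abs_bCoef_le i j p q⟩
  have hpointwise : EqOn
      (fun x => ∑ i, ∑ j, ((if i = j then (1 : ℝ) else 0)
          + bCoef i j (fun k => pd (uavg u₁ u₂) k x) (fun k => pd (usd u₁ u₂) k x))
        * pd (usd u₁ u₂) j x * pd ζ i x)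
      (fun x => (∑ i, Fcomp u₂ i x * pd ζ i x) / 2 - (∑ i, Fcomp u₁ i x * pd ζ i x) / 2) Ω :=
    fun x hx => sum_coef_mul_pd_usd_mul_pd
      ((h1.differentiableOn one_ne_zero).differentiableAt (hΩ.mem_nhds hx))
      ((h2.differentiableOn one_ne_zero).differentiableAt (hΩ.mem_nhds hx)) ζ
  rw [setIntegral_congr_fun hΩ.measurableSet hpointwise,
    integral_sub ((integrable_sum_Fcomp_mul_pd u₂ hζ hcs).integrableOn.div_const 2)
      ((integrable_sum_Fcomp_mul_pd u₁ hζ hcs).integrableOn.div_const 2),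
    integral_div, integral_div, hw1 ζ hζ hcs hsupp, hw2 ζ hζ hcs hsupp]
  ring
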